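/- arXiv:1701.05463 — 2 statements merged into one kernel-verified Lean document; each statement's English description precedes it below -/
import Mathlib

section
/- Adding a fresh invocation event preserves history well-formedness: let H=(E,R) be a history, t a thread such that every event of thread t in E is completed, i a fresh event identifier not in ids(E), and op ∈ Op, a ∈ Val. Then the pair (E ∪ {[i:(t,op,a,todo)]}, R ∪ {(j,i) | j is the identifier of a completed event of E}) is again a history: the extended relation is a strict partial order and an interval order, events of each thread remain totally ordered, and uncompleted events remain maximal. -/
/-- An event: a thread, an operation, an argument and a return value
(`none` models `todo`, i.e. an uncompleted event). -/
structure Evt (ThreadID Op Val : Type) where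
  tid : ThreadID
  op : Op
  arg : Val
  res : Option Val

/-- A (raw) history: a set of event identifiers, an assignment of events to
identifiers, and a real-time order on identifiers. -/
structure Hist (EventID ThreadID Op Val : Type) where
  ids : Set EventID
  ev : EventID → Evt ThreadID Op Val
  rt : EventID → EventID → Prop

namespace Hist

variable {EventID ThreadID Op Val : Type}

/-- Identifiers of completed events. -/
def completedIds (H : Hist EventID ThreadID Op Val) : Set EventID :=
  {i | i ∈ H.ids ∧ (H.ev i).res ≠ none}

/-- Well-formedness of a history (Definition 1): finitely many events, the
real-time order is a strict partial order on the identifiers, events of each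
thread are totally ordered, uncompleted events are maximal, and the order is
an interval order. -/
def IsHistory (H : Hist EventID ThreadID Op Val) : Prop :=
  H.ids.Finite ∧
  (∀ i j, H.rt i j → i ∈ H.ids ∧ j ∈ H.ids) ∧
  (∀ i j k, H.rt i j → H.rt j k → H.rt i k) ∧
  (∀ i, ¬ H.rt i i) ∧
  (∀ i j, i ∈ H.ids → j ∈ H.ids → i ≠ j → (H.ev i).tid = (H.ev j).tid →
    H.rt i j ∨ H.rt j i) ∧
  (∀ i, i ∈ H.ids → (H.ev i).res = none → ∀ j, ¬ H.rt i j) ∧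
  (∀ i1 i2 i3 i4, H.rt i1 i2 → H.rt i3 i4 → H.rt i1 i4 ∨ H.rt i3 i2)

/-- A history is sequential if all events are completed and the order is total. -/
def IsSeq (H : Hist EventID ThreadID Op Val) : Prop :=
  (∀ i ∈ H.ids, (H.ev i).res ≠ none) ∧
  (∀ i j, i ∈ H.ids → j ∈ H.ids → i ≠ j → H.rt i j ∨ H.rt j i)

/-- `⌊H⌋`: restriction of a history to its completed events. -/
def floor (H : Hist EventID ThreadID Op Val) : Hist EventID ThreadID Op Val :=
  ⟨H.completedIds, H.ev,
    fun i j => H.rt i j ∧ i ∈ H.completedIds ∧ j ∈ H.completedIds⟩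

/-- `H ⊑ H'`: the two histories have the same events and the real-time order
of `H` is preserved in (contained in that of) `H'`. -/
def RTPres (H H' : Hist EventID ThreadID Op Val) : Prop :=
  H.ids = H'.ids ∧ (∀ i ∈ H.ids, H.ev i = H'.ev i) ∧
  ∀ i j, H.rt i j → H'.rt i j

/-- `e ↠ e'`: the event `e` can be completed to `e'`. -/
def EvtCompletes (e e' : Evt ThreadID Op Val) : Prop :=
  e.tid = e'.tid ∧ e.op = e'.op ∧ e.arg = e'.arg ∧
  ((e.res = e'.res ∧ e.res ≠ none) ∨ e.res = none)

/-- `H ≼ H'`: the history `H` can be completed to the history `H'`. -/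
def Completes (H H' : Hist EventID ThreadID Op Val) : Prop :=
  H'.ids ⊆ H.ids ∧
  (∀ i ∈ H.ids, (H.ev i).res ≠ none → i ∈ H'.ids ∧ H'.ev i = H.ev i) ∧
  (∀ i j, i ∈ H'.ids → j ∈ H'.ids → (H.rt i j ↔ H'.rt i j)) ∧
  (∀ i ∈ H'.ids, EvtCompletes (H.ev i) (H'.ev i))

/-- `H ⇝ H'`: the history `H'` extends `H`: same event identifiers, events
agree on thread, operation and argument and keep their return value unless
uncompleted in `H`, and the order only grows. -/
def HExt (H H' : Hist EventID ThreadID Op Val) : Prop :=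
  H.ids = H'.ids ∧
  (∀ i ∈ H.ids,
    (H'.ev i).tid = (H.ev i).tid ∧ (H'.ev i).op = (H.ev i).op ∧
    (H'.ev i).arg = (H.ev i).arg ∧
    ((H.ev i).res ≠ none → (H'.ev i).res = (H.ev i).res)) ∧
  ∀ i j, H.rt i j → H'.rt i j

/-- `abs(H, 𝓗)`: every linearization of the completed part of `H` belongs to `𝓗`. -/
def Abs (H : Hist EventID ThreadID Op Val)
    (Hs : Set (Hist EventID ThreadID Op Val)) : Prop :=
  ∀ H', RTPres H.floor H' → IsSeq H' → H' ∈ Hs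

/-- A set of histories is linearized by a set of (sequential) histories. -/
def Linearized (H1s H2s : Set (Hist EventID ThreadID Op Val)) : Prop :=
  ∀ H1 ∈ H1s, ∃ H2 ∈ H2s, ∃ H1',
    Completes H1 H1' ∧ RTPres H1' H2

end Hist

/-- **Adding a fresh invocation event preserves history well-formedness.**
If `H` is a history, every event of thread `t` in `H` is completed, and
`i ∉ ids(H)`, then extending `H` with the fresh uncompleted event
`[i : (t, op, a, todo)]` ordered after all completed events of `H` again
yields a (well-formed) history. -/
theorem add_invocation_preserves_history
    {EventID ThreadID Op Val : Type} [DecidableEq EventID]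
    (H : Hist EventID ThreadID Op Val) (hH : H.IsHistory)
    (t : ThreadID)
    (ht : ∀ i ∈ H.ids, (H.ev i).tid = t → (H.ev i).res ≠ none)
    (i : EventID) (hi : i ∉ H.ids) (op : Op) (a : Val) :
    Hist.IsHistory
      ⟨insert i H.ids,
       Function.update H.ev i ⟨t, op, a, none⟩,
       fun j k => H.rt j k ∨ (k = i ∧ j ∈ H.completedIds)⟩ := by
  obtain ⟨hfin, hdom, htrans, hirr, htot, hmax, hintv⟩ := hH
  have hcsub : ∀ j, j ∈ H.completedIds → j ∈ H.ids := fun j hj => hj.1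
  have hine : ∀ j, j ∈ H.ids → j ≠ i := fun j hj hji => hi (hji ▸ hj)
  refine ⟨hfin.insert i, ?_, ?_, ?_, ?_, ?_, ?_⟩
  · rintro j k (h | ⟨hek, hj⟩)
    · exact ⟨Set.mem_insert_of_mem _ (hdom _ _ h).1,
        Set.mem_insert_of_mem _ (hdom _ _ h).2⟩
    · exact ⟨Set.mem_insert_of_mem _ hj.1, hek ▸ Set.mem_insert _ _⟩
  · rintro j k l (h1 | ⟨hek, hj⟩) (h2 | ⟨hel, hk⟩)
    · exact Or.inl (htrans _ _ _ h1 h2)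
    · exact Or.inr ⟨hel, (hdom _ _ h1).1, by
        intro hn; exact hmax _ (hdom _ _ h1).1 hn _ h1⟩
    · exact absurd (hek ▸ (hdom _ _ h2).1 : i ∈ H.ids) hi
    · exact absurd (hek ▸ hcsub _ hk : i ∈ H.ids) hi
  · rintro j (h | ⟨heq, hj⟩)
    · exact hirr _ h
    · exact hi (heq ▸ hcsub _ hj)
  · intro j k hj hk hjk htid
    simp only [Set.mem_insert_iff] at hj hk
    dsimp only at htid ⊢
    rcases hj with rfl | hj
    · rcases hk with rfl | hk
      · exact absurd rfl hjk
      · have hkt : (H.ev k).tid = t := by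
          rw [Function.update_self, Function.update_of_ne (hine _ hk)] at htid
          exact htid.symm
        exact Or.inr (Or.inr ⟨rfl, hk, ht k hk hkt⟩)
    · rcases hk with rfl | hk
      · rw [Function.update_of_ne (hine _ hj), Function.update_self] at htid
        exact Or.inl (Or.inr ⟨rfl, hj, ht j hj htid⟩)
      · rw [Function.update_of_ne (hine _ hj), Function.update_of_ne (hine _ hk)] at htid
        rcases htot _ _ hj hk hjk htid with h | h
        · exact Or.inl (Or.inl h)
        · exact Or.inr (Or.inl h)
  · intro j hj hres k
    simp only [Set.mem_insert_iff] at hj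
    dsimp only at hres
    rcases hj with rfl | hj
    · rintro (h | ⟨_, hc⟩)
      · exact hi (hdom _ _ h).1
      · exact hi (hcsub _ hc)
    · rw [Function.update_of_ne (hine _ hj)] at hres
      rintro (h | ⟨_, hc⟩)
      · exact hmax _ hj hres _ h
      · exact hc.2 hres
  · rintro i1 i2 i3 i4 (h1 | ⟨he2, hc1⟩) (h2 | ⟨he4, hc3⟩)
    · rcases hintv _ _ _ _ h1 h2 with h | h
      · exact Or.inl (Or.inl h)
      · exact Or.inr (Or.inl h)
    · exact Or.inl (Or.inr ⟨he4, (hdom _ _ h1).1, by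
        intro hn; exact hmax _ (hdom _ _ h1).1 hn _ h1⟩)
    · exact Or.inr (Or.inr ⟨he2, (hdom _ _ h2).1, by
        intro hn; exact hmax _ (hdom _ _ h2).1 hn _ h2⟩)
    · exact Or.inl (Or.inr ⟨he4, hc1⟩)
end

section
/- Minimality of the removed enqueue in the Herlihy–Wing queue: let (s, (E,R), G_slot) be a configuration satisfying: INV_ALG (for all e1, e2 ∈ UnTaken(s,E,G_slot), e1 R e2 implies G_slot(e1) < G_slot(e2)); INV_WF (G_slot is injective, every e ∈ dom(G_slot) satisfies G_slot(e) < s(back), and for every index k', s(Array[k']) ≠ NULL iff there is an untaken completed enqueue event e with G_slot(e) = k'); and the loop invariant for loop index k and bound n with k ≤ s(n) ≤ s(back): for all e, e' ∈ UnTaken(s,E,G_slot), G_slot(e) < k ≤ G_slot(e') ≤ s(n) implies ¬(e R e'). If s(Array[k]) ≠ NULL, then the unique ENQ ∈ UnTaken(s,E,G_slot) with G_slot(ENQ) = k is R-minimal among untaken enqueue events: for every e ∈ UnTaken(s,E,G_slot), ¬(e R ENQ). -/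
/-- A configuration of the Herlihy–Wing queue: the infinite array (`none` =
`NULL`), the index `back`, an abstract history (event identifiers with a flag
for enqueues, arguments, completion status and the real-time order), and the
ghost slot map `G_slot`. -/
structure HWConfig (EventID Val : Type) where
  arr : ℕ → Option Val
  back : ℕ
  ids : Set EventID
  isEnq : EventID → Prop
  arg : EventID → Val
  completed : EventID → Prop
  rt : EventID → EventID → Prop
  Gslot : EventID → Option ℕ

/-- `UnTaken(s, E, G_slot)`: the completed enqueue events whose value has
been written into its slot and not yet taken by a dequeue. -/
def unTaken {EventID Val : Type} (κ : HWConfig EventID Val) : Set EventID :=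
  { e | e ∈ κ.ids ∧ κ.isEnq e ∧ κ.completed e ∧
        ∃ k, κ.Gslot e = some k ∧ κ.arr k = some (κ.arg e) }

/-- **Minimality of the removed enqueue in the Herlihy–Wing queue (Lemma C.1
of the paper).** In a configuration satisfying `INV_ALG`, `INV_WF` and the
loop invariant for loop index `k` and bound `n` with `k ≤ n ≤ back`, if
`Array[k] ≠ NULL`, then the unique untaken enqueue event `ENQ` with slot `k`
is `R`-minimal among untaken enqueue events. -/
theorem herlihy_wing_min_untaken
    {EventID Val : Type}
    (κ : HWConfig EventID Val)
    -- history well-formedness: R transitive, irreflexive, uncompleted maximal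
    (hrt_trans : ∀ a b c, κ.rt a b → κ.rt b c → κ.rt a c)
    (hrt_irrefl : ∀ a, ¬ κ.rt a a)
    (hmax : ∀ i ∈ κ.ids, ¬ κ.completed i → ∀ j, ¬ κ.rt i j)
    -- INV_ALG: the order on untaken enqueue events does not contradict the
    -- order in which they appear in the array
    (hALG : ∀ e1 ∈ unTaken κ, ∀ e2 ∈ unTaken κ, κ.rt e1 e2 →
        ∀ k1 k2, κ.Gslot e1 = some k1 → κ.Gslot e2 = some k2 → k1 < k2)
    -- INV_WF: G_slot is injective, slots precede back, and a cell is
    -- non-NULL exactly when it is the slot of an untaken completed enqueue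
    (hinj : ∀ e e' k, κ.Gslot e = some k → κ.Gslot e' = some k → e = e')
    (hback : ∀ e k, κ.Gslot e = some k → k < κ.back)
    (hcells : ∀ k', κ.arr k' ≠ none ↔ ∃ e ∈ unTaken κ, κ.Gslot e = some k')
    -- loop index and bound
    (k n : ℕ) (hkn : k ≤ n) (hnback : n ≤ κ.back)
    -- the loop invariant
    (hLI : ∀ e ∈ unTaken κ, ∀ e' ∈ unTaken κ, ∀ ke ke',
        κ.Gslot e = some ke → κ.Gslot e' = some ke' →
        ke < k → k ≤ ke' → ke' ≤ n → ¬ κ.rt e e')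
    -- the current cell is non-NULL and ENQ is the untaken enqueue owning it
    (hcell : κ.arr k ≠ none)
    (ENQ : EventID) (hENQ : ENQ ∈ unTaken κ ∧ κ.Gslot ENQ = some k) :
    ∀ e ∈ unTaken κ, ¬ κ.rt e ENQ := by
  intro e he hrt
  obtain ⟨hU, hG⟩ := hENQ
  obtain ⟨ke, hke, -⟩ := he.2.2.2
  have hlt : ke < k := hALG e he ENQ hU hrt ke k hke hG
  exact hLI e he ENQ hU ke k hke hG hlt le_rfl hkn hrt
end
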